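/- The elements t_{x,y} lie in the triality Lie algebra: let C be a composition algebra over F with norm n, polar form b and para-Hurwitz product x•y = x̄·ȳ, and for x ∈ C let l_x(z) = x•z and r_x(z) = z•x. Then for all x, y ∈ C the triple t_{x,y} = (σ_{x,y}, ½b(x,y)·id − r_x∘l_y, ½b(x,y)·id − l_x∘r_y), where σ_{x,y}(z) = b(x,z)y − b(y,z)x, consists of b-skew linear endomorphisms of C and satisfies the triality relation: σ_{x,y}(u•v) = (½b(x,y)u − (y•u)•x)•v + u•(½b(x,y)v − x•(v•y)) for all u, v ∈ C. -/

import Mathlib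

/-- A composition algebra over a field `F`: a unital (not necessarily associative)
`F`-algebra endowed with a multiplicative quadratic form whose polar bilinear form
is nondegenerate. -/
structure CompositionAlgebra (F : Type*) [Field F] (C : Type*)
    [AddCommGroup C] [Module F C] where
  mul : C →ₗ[F] C →ₗ[F] C
  one : C
  one_mul : ∀ x : C, mul one x = x
  mul_one : ∀ x : C, mul x one = x
  n : QuadraticForm F C
  norm_mul : ∀ x y : C, n (mul x y) = n x * n y
  nondeg : ∀ x : C, (∀ y : C, QuadraticMap.polar ⇑n x y = 0) → x = 0

/-- The polar form `b(x,y) = n(x+y) - n(x) - n(y)` of the norm. -/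
def CompositionAlgebra.b {F : Type*} [Field F] {C : Type*} [AddCommGroup C] [Module F C]
    (A : CompositionAlgebra F C) (x y : C) : F :=
  QuadraticMap.polar ⇑A.n x y

/-- The trace `t(x) = b(x,1)`. -/
def CompositionAlgebra.t {F : Type*} [Field F] {C : Type*} [AddCommGroup C] [Module F C]
    (A : CompositionAlgebra F C) (x : C) : F :=
  A.b x A.one

/-- The standard involution `x̄ = t(x)·1 − x`. -/
def CompositionAlgebra.conj {F : Type*} [Field F] {C : Type*} [AddCommGroup C] [Module F C]
    (A : CompositionAlgebra F C) (x : C) : C :=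
  A.t x • A.one - x

/-- The para-Hurwitz product `x • y = x̄·ȳ`. -/
def CompositionAlgebra.paraMul {F : Type*} [Field F] {C : Type*}
    [AddCommGroup C] [Module F C] (A : CompositionAlgebra F C) (x y : C) : C :=
  A.mul (A.conj x) (A.conj y)

namespace CompositionAlgebra

variable {F : Type*} [Field F] {C : Type*} [AddCommGroup C] [Module F C]
  (A : CompositionAlgebra F C)

lemma b_comm (x y : C) : A.b x y = A.b y x := QuadraticMap.polar_comm _ x y

lemma b_add_left (x x' y : C) : A.b (x + x') y = A.b x y + A.b x' y :=
  QuadraticMap.polar_add_left A.n x x' y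

lemma b_add_right (x y y' : C) : A.b x (y + y') = A.b x y + A.b x y' :=
  QuadraticMap.polar_add_right A.n x y y'

lemma b_sub_left (x x' y : C) : A.b (x - x') y = A.b x y - A.b x' y :=
  QuadraticMap.polar_sub_left A.n x x' y

lemma b_sub_right (x y y' : C) : A.b x (y - y') = A.b x y - A.b x y' :=
  QuadraticMap.polar_sub_right A.n x y y'

lemma b_smul_left (a : F) (x y : C) : A.b (a • x) y = a * A.b x y := by
  simp only [CompositionAlgebra.b]
  rw [QuadraticMap.polar_smul_left, smul_eq_mul]

lemma b_smul_right (a : F) (x y : C) : A.b x (a • y) = a * A.b x y := by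
  simp only [CompositionAlgebra.b]
  rw [QuadraticMap.polar_smul_right, smul_eq_mul]

lemma b_ext {u v : C} (h : ∀ z : C, A.b u z = A.b v z) : u = v := by
  have h0 : u - v = 0 := A.nondeg _ (fun z => by
    have : A.b (u - v) z = 0 := by rw [A.b_sub_left, h z, sub_self]
    exact this)
  exact sub_eq_zero.mp h0

lemma mul_add_l (x z y : C) : A.mul (x + z) y = A.mul x y + A.mul z y := by
  rw [map_add]; rfl

lemma mul_sub_l (x z y : C) : A.mul (x - z) y = A.mul x y - A.mul z y := by
  rw [map_sub]; rfl

lemma mul_smul_l (a : F) (x y : C) : A.mul (a • x) y = a • A.mul x y := by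
  rw [map_smul]; rfl

lemma n_add (x z : C) : A.n (x + z) = A.n x + A.n z + A.b x z := by
  simp only [CompositionAlgebra.b, QuadraticMap.polar]; ring

lemma bscaleL (x y w : C) : A.b (A.mul x y) (A.mul x w) = A.n x * A.b y w := by
  have h1 := A.norm_mul x (y + w)
  rw [map_add] at h1
  simp only [CompositionAlgebra.b, QuadraticMap.polar]
  rw [h1, A.norm_mul, A.norm_mul]
  ring

lemma bscaleR (x y w : C) : A.b (A.mul y x) (A.mul w x) = A.n x * A.b y w := by
  have h1 := A.norm_mul (y + w) x
  rw [A.mul_add_l] at h1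
  simp only [CompositionAlgebra.b, QuadraticMap.polar]
  rw [h1, A.norm_mul, A.norm_mul]
  ring

lemma B4 (x y z w : C) :
    A.b (A.mul x y) (A.mul z w) + A.b (A.mul z y) (A.mul x w) = A.b x z * A.b y w := by
  have h := A.bscaleL (x + z) y w
  rw [A.mul_add_l, A.mul_add_l, A.b_add_left, A.b_add_right, A.b_add_right, A.n_add] at h
  linear_combination h - A.bscaleL x y w - A.bscaleL z y w

lemma B4R (x x' y w : C) :
    A.b (A.mul y x) (A.mul w x') + A.b (A.mul y x') (A.mul w x) = A.b x x' * A.b y w := by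
  have h := A.bscaleR (x + x') y w
  rw [map_add, map_add, A.b_add_left, A.b_add_right, A.b_add_right, A.n_add] at h
  linear_combination h - A.bscaleR x y w - A.bscaleR x' y w

lemma mul_conj_r (r q : C) : A.mul r (A.conj q) = A.t q • r - A.mul r q := by
  simp only [CompositionAlgebra.conj, map_sub, map_smul, A.mul_one]

lemma mul_conj_l (q r : C) : A.mul (A.conj q) r = A.t q • r - A.mul q r := by
  simp only [CompositionAlgebra.conj, map_sub, map_smul, LinearMap.sub_apply,
    LinearMap.smul_apply, A.one_mul]

lemma adjR (p q r : C) : A.b (A.mul p q) r = A.b p (A.mul r (A.conj q)) := by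
  have h := A.B4 p q r A.one
  rw [A.mul_one, A.mul_one] at h
  rw [A.mul_conj_r, A.b_sub_right, A.b_smul_right]
  have hc := A.b_comm (A.mul r q) p
  simp only [CompositionAlgebra.t]
  linear_combination h - hc

lemma adjL (p q r : C) : A.b (A.mul p q) r = A.b q (A.mul (A.conj p) r) := by
  have h := A.B4 p q A.one r
  rw [A.one_mul, A.one_mul] at h
  rw [A.mul_conj_l, A.b_sub_right, A.b_smul_right]
  simp only [CompositionAlgebra.t]
  linear_combination h


lemma b_one_one (h1 : A.n A.one = 1) : A.b A.one A.one = 2 := by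
  have h := QuadraticMap.polar_self (Q := A.n) A.one
  rw [h1] at h
  simp only [CompositionAlgebra.b]
  rw [h]; norm_num

lemma t_conj (h1 : A.n A.one = 1) (p : C) : A.t (A.conj p) = A.t p := by
  simp only [CompositionAlgebra.t, CompositionAlgebra.conj]
  rw [A.b_sub_left, A.b_smul_left, A.b_one_one h1]; ring

lemma conj_conj (h1 : A.n A.one = 1) (p : C) : A.conj (A.conj p) = p := by
  have h := A.t_conj h1 p
  simp only [CompositionAlgebra.conj] at h ⊢
  rw [h]; abel

lemma t_smul (a : F) (p : C) : A.t (a • p) = a * A.t p := by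
  simp only [CompositionAlgebra.t]; exact A.b_smul_left a p A.one

lemma t_sub (p q : C) : A.t (p - q) = A.t p - A.t q := by
  simp only [CompositionAlgebra.t]; exact A.b_sub_left p q A.one

lemma conj_smul (a : F) (p : C) : A.conj (a • p) = a • A.conj p := by
  simp only [CompositionAlgebra.conj, A.t_smul]; module

lemma conj_sub (p q : C) : A.conj (p - q) = A.conj p - A.conj q := by
  simp only [CompositionAlgebra.conj, A.t_sub]; module

lemma b_conj_swap (p q : C) : A.b (A.conj p) q = A.b p (A.conj q) := by
  simp only [CompositionAlgebra.conj, CompositionAlgebra.t]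
  rw [A.b_sub_left, A.b_sub_right, A.b_smul_left, A.b_smul_right]
  linear_combination (A.b p A.one) * A.b_comm A.one q

lemma b_conj_conj (h1 : A.n A.one = 1) (p q : C) :
    A.b (A.conj p) (A.conj q) = A.b p q := by
  rw [A.b_conj_swap, A.conj_conj h1]

lemma conj_mul (h1 : A.n A.one = 1) (p q : C) :
    A.conj (A.mul p q) = A.mul (A.conj q) (A.conj p) := by
  refine A.b_ext fun z => ?_
  calc A.b (A.conj (A.mul p q)) z = A.b (A.mul p q) (A.conj z) := A.b_conj_swap _ _
    _ = A.b q (A.mul (A.conj p) (A.conj z)) := A.adjL _ _ _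
    _ = A.b (A.mul q z) (A.conj p) := (A.adjR q z (A.conj p)).symm
    _ = A.b (A.conj p) (A.mul q z) := A.b_comm _ _
    _ = A.b (A.mul (A.conj q) (A.conj p)) z := by
          rw [A.adjL (A.conj q) (A.conj p) z, A.conj_conj h1]

lemma hA (h1 : A.n A.one = 1) (p q r : C) :
    A.b (A.mul p (A.conj q)) r = A.b p (A.mul r q) := by
  rw [A.adjR, A.conj_conj h1]

lemma hB (h1 : A.n A.one = 1) (p q r : C) :
    A.b (A.mul (A.conj p) q) r = A.b q (A.mul p r) := by
  rw [A.adjL, A.conj_conj h1]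

lemma blinL (h1 : A.n A.one = 1) (p q r w : C) :
    A.b (A.mul p (A.mul (A.conj q) r)) w + A.b (A.mul q (A.mul (A.conj p) r)) w
      = A.b p q * A.b r w := by
  rw [A.adjL p _ w, A.adjL q _ w]
  have h := A.B4 (A.conj q) r (A.conj p) w
  rw [A.b_conj_conj h1] at h
  linear_combination h + (A.b_comm q p) * A.b r w

lemma blinR (h1 : A.n A.one = 1) (p q r w : C) :
    A.b (A.mul (A.mul r (A.conj q)) p) w + A.b (A.mul (A.mul r (A.conj p)) q) w
      = A.b p q * A.b r w := by
  rw [A.adjR _ p w, A.adjR _ q w]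
  have h := A.B4R (A.conj q) (A.conj p) r w
  rw [A.b_conj_conj h1] at h
  linear_combination h + (A.b_comm q p) * A.b r w

lemma linL (h1 : A.n A.one = 1) (x y r : C) :
    A.mul x (A.mul (A.conj y) r) + A.mul y (A.mul (A.conj x) r) = A.b x y • r := by
  refine A.b_ext fun z => ?_
  rw [A.b_add_left, A.b_smul_left]
  exact A.blinL h1 x y r z

lemma linR (h1 : A.n A.one = 1) (x y r : C) :
    A.mul (A.mul r (A.conj y)) x + A.mul (A.mul r (A.conj x)) y = A.b x y • r := by
  refine A.b_ext fun z => ?_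
  rw [A.b_add_left, A.b_smul_left]
  exact A.blinR h1 x y r z

lemma paraP (h1 : A.n A.one = 1) (y u x : C) :
    A.paraMul (A.paraMul y u) x = A.mul (A.mul u y) (A.conj x) := by
  simp only [CompositionAlgebra.paraMul]
  rw [A.conj_mul h1, A.conj_conj h1, A.conj_conj h1]

lemma paraQ (h1 : A.n A.one = 1) (x v y : C) :
    A.paraMul x (A.paraMul v y) = A.mul (A.conj x) (A.mul y v) := by
  simp only [CompositionAlgebra.paraMul]
  rw [A.conj_mul h1, A.conj_conj h1, A.conj_conj h1]


lemma WZ (h1 : A.n A.one = 1) (x y a c z : C) :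
    A.b (A.mul (A.conj z) a) (A.mul (A.conj y) (A.mul x (A.conj c)))
      + A.b (A.mul (A.mul c (A.conj z)) y) (A.mul (A.conj a) x)
    = A.b x (A.mul a c) * A.b y z + A.b z (A.mul a c) * A.b x y
      - A.b x z * A.b y (A.mul a c) := by
  have EW : A.b (A.mul (A.conj z) a) (A.mul (A.conj y) (A.mul x (A.conj c)))
      = A.b y (A.mul (A.mul x (A.conj c)) (A.mul (A.conj a) z)) := by
    rw [A.b_comm, A.adjR (A.conj y) (A.mul x (A.conj c)) (A.mul (A.conj z) a),
      A.b_conj_swap]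
    simp only [A.conj_mul h1, A.conj_conj h1]
  have EZ : A.b (A.mul (A.mul c (A.conj z)) y) (A.mul (A.conj a) x)
      = A.b y (A.mul (A.mul z (A.conj c)) (A.mul (A.conj a) x)) := by
    rw [A.adjL (A.mul c (A.conj z)) y (A.mul (A.conj a) x)]
    simp only [A.conj_mul h1, A.conj_conj h1]
  have F1 := A.blinL h1 (A.mul x (A.conj c)) a z y
  simp only [A.conj_mul h1, A.conj_conj h1] at F1
  have F2 := A.blinL h1 (A.mul z (A.conj c)) a x y
  simp only [A.conj_mul h1, A.conj_conj h1] at F2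
  have F3 : A.b (A.mul a (A.mul (A.mul c (A.conj x)) z)) y
      + A.b (A.mul a (A.mul (A.mul c (A.conj z)) x)) y
      = A.b z x * A.b (A.mul a c) y := by
    have L := A.linR h1 z x c
    rw [← A.b_add_left, ← map_add, L, map_smul, A.b_smul_left]
  rw [A.hA h1 x c a] at F1
  rw [A.b_comm z y] at F1
  rw [A.hA h1 z c a] at F2
  rw [A.b_comm z x, A.b_comm (A.mul a c) y] at F3
  have cc1 := A.b_comm y (A.mul (A.mul x (A.conj c)) (A.mul (A.conj a) z))
  have cc2 := A.b_comm y (A.mul (A.mul z (A.conj c)) (A.mul (A.conj a) x))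
  linear_combination EW + EZ + cc1 + cc2 + F1 + F2 - F3

lemma Tsum (h1 : A.n A.one = 1) (x y a c z : C) :
    A.b (A.mul (A.mul y (A.mul (A.conj x) a)) c) z
      + A.b (A.mul a (A.mul (A.mul c (A.conj x)) y)) z
    = A.b x y * A.b z (A.mul a c) + A.b x (A.mul a c) * A.b y z
      - A.b y (A.mul a c) * A.b x z := by
  have e1 := A.adjR (A.mul y (A.mul (A.conj x) a)) c z
  have e2 := A.adjL y (A.mul (A.conj x) a) (A.mul z (A.conj c))
  have e3 := A.B4 (A.conj x) a (A.conj y) (A.mul z (A.conj c))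
  have e4 := A.b_conj_conj h1 x y
  have e5 : A.b a (A.mul z (A.conj c)) = A.b z (A.mul a c) := by
    rw [A.b_comm, A.hA h1]
  have e6 := A.blinL h1 (A.conj x) (A.conj z) (A.conj c) (A.mul (A.conj y) a)
  simp only [A.conj_conj h1] at e6
  have e7 := A.b_conj_conj h1 x z
  have e8 : A.b (A.conj c) (A.mul (A.conj y) a) = A.b y (A.mul a c) := by
    rw [A.b_comm, A.hB h1, A.b_comm, A.hA h1]
  have e9 := A.B4 (A.conj y) a (A.conj z) (A.mul x (A.conj c))
  have e10 := A.b_conj_conj h1 y z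
  have e11 : A.b a (A.mul x (A.conj c)) = A.b x (A.mul a c) := by
    rw [A.b_comm, A.hA h1]
  have g1 := A.b_comm (A.mul (A.conj y) a) (A.mul (A.conj x) (A.mul z (A.conj c)))
  have g2 := A.b_comm (A.mul (A.conj z) (A.mul x (A.conj c))) (A.mul (A.conj y) a)
  have f1 := A.adjL a (A.mul (A.mul c (A.conj x)) y) z
  have f2 := A.B4 (A.mul c (A.conj x)) y (A.conj a) z
  have f3 : A.b (A.mul c (A.conj x)) (A.conj a) = A.b x (A.mul a c) := by
    rw [A.hA h1, A.b_comm, A.hB h1]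
  have f4 := A.blinR h1 z x c (A.mul (A.conj a) y)
  have f5 : A.b c (A.mul (A.conj a) y) = A.b y (A.mul a c) := by
    rw [A.b_comm, A.hB h1]
  have f6 := A.B4 (A.conj a) y (A.mul c (A.conj z)) x
  have f7 : A.b (A.conj a) (A.mul c (A.conj z)) = A.b z (A.mul a c) := by
    rw [A.b_comm, A.hA h1, A.b_comm, A.hB h1]
  have g4 := A.b_comm (A.mul (A.conj a) y) (A.mul (A.mul c (A.conj x)) z)
  have g5 := A.b_comm (A.mul (A.conj a) y) (A.mul (A.mul c (A.conj z)) x)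
  have g6 := A.b_comm y x
  have g7 := A.b_comm z x
  have WZe := A.WZ h1 x y a c z
  linear_combination e1 + e2 + e3 - g1 - e6 + g2 + e9
    + (A.b a (A.mul z (A.conj c))) * e4 + (A.b x y) * e5
    - (A.b (A.conj c) (A.mul (A.conj y) a)) * e7 - (A.b x z) * e8
    + (A.b a (A.mul x (A.conj c))) * e10 + (A.b y z) * e11
    + f1 + f2 - g4 - f4 + f6 - g5
    + (A.b y z) * f3
    - (A.b c (A.mul (A.conj a) y)) * g7 - (A.b x z) * f5
    + (A.b y x) * f7 + (A.b z (A.mul a c)) * g6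
    - WZe

lemma mainE (h1 : A.n A.one = 1) (x y a c : C) :
    A.mul (A.mul y (A.mul (A.conj x) a)) c + A.mul a (A.mul (A.mul c (A.conj x)) y)
      = A.b x y • A.mul a c + A.b x (A.mul a c) • y - A.b y (A.mul a c) • x := by
  refine A.b_ext fun z => ?_
  rw [A.b_add_left, A.b_sub_left, A.b_add_left, A.b_smul_left, A.b_smul_left,
    A.b_smul_left]
  linear_combination A.Tsum h1 x y a c z + (A.b x y) * A.b_comm z (A.mul a c)

end CompositionAlgebra

/-- The elements `t_{x,y} = (σ_{x,y}, ½b(x,y)id − r_x l_y, ½b(x,y)id − l_x r_y)`,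
with `σ_{x,y}(z) = b(x,z)y − b(y,z)x`, lie in the triality Lie algebra of the
para-Hurwitz product: all three components are `b`-skew, and
`σ_{x,y}(u•v) = (½b(x,y)u − (y•u)•x)•v + u•(½b(x,y)v − x•(v•y))`. -/
theorem t_xy_in_triality {F : Type*} [Field F] {C : Type*}
    [AddCommGroup C] [Module F C] [FiniteDimensional F C]
    (hF : ringChar F ≠ 2) (A : CompositionAlgebra F C) (x y : C) :
    (∀ u v : C, A.b (A.b x u • y - A.b y u • x) v + A.b u (A.b x v • y - A.b y v • x) = 0) ∧
    (∀ u v : C, A.b (((1 / 2 : F) * A.b x y) • u - A.paraMul (A.paraMul y u) x) v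
      + A.b u (((1 / 2 : F) * A.b x y) • v - A.paraMul (A.paraMul y v) x) = 0) ∧
    (∀ u v : C, A.b (((1 / 2 : F) * A.b x y) • u - A.paraMul x (A.paraMul u y)) v
      + A.b u (((1 / 2 : F) * A.b x y) • v - A.paraMul x (A.paraMul v y)) = 0) ∧
    (∀ u v : C,
      A.b x (A.paraMul u v) • y - A.b y (A.paraMul u v) • x
        = A.paraMul (((1 / 2 : F) * A.b x y) • u - A.paraMul (A.paraMul y u) x) v
          + A.paraMul u (((1 / 2 : F) * A.b x y) • v - A.paraMul x (A.paraMul v y))) := by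
  by_cases hC : ∀ w : C, w = 0
  · have hb : ∀ p q : C, A.b p q = 0 := fun p q => by
      rw [hC p]; exact QuadraticMap.polar_zero_left (Q := A.n) q
    refine ⟨fun u v => by simp only [hb]; norm_num,
      fun u v => by simp only [hb]; norm_num,
      fun u v => by simp only [hb]; norm_num,
      fun u v => (hC _).trans (hC _).symm⟩
  · push_neg at hC
    obtain ⟨w0, hw0⟩ := hC
    have h2 : (2 : F) ≠ 0 := Ring.two_ne_zero hF
    have hnz : A.n A.one ≠ 0 := by
      intro h0
      apply hw0
      apply A.nondeg
      intro yz
      have hv : ∀ v : C, A.n v = 0 := fun v => by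
        have hnm := A.norm_mul v A.one
        rw [A.mul_one] at hnm
        rw [hnm, h0, mul_zero]
      show QuadraticMap.polar ⇑A.n w0 yz = 0
      simp [QuadraticMap.polar, hv]
    have h1 : A.n A.one = 1 := by
      have hsq : A.n A.one * A.n A.one = A.n A.one * 1 := by
        have hnm := A.norm_mul A.one A.one
        rw [A.one_mul] at hnm
        rw [← hnm, mul_one]
      exact mul_left_cancel₀ hnz hsq
    have hh2 : (1 / 2 : F) * A.b x y + (1 / 2 : F) * A.b x y = A.b x y := by
      rw [← add_mul, ← add_div, one_add_one_eq_two, div_self h2, one_mul]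
    refine ⟨?_, ?_, ?_, ?_⟩
    · intro u v
      rw [A.b_sub_left, A.b_sub_right, A.b_smul_left, A.b_smul_left, A.b_smul_right,
        A.b_smul_right]
      linear_combination (A.b x v) * A.b_comm u y - (A.b y v) * A.b_comm u x
    · intro u v
      rw [A.paraP h1 y u x, A.paraP h1 y v x, A.b_sub_left, A.b_sub_right,
        A.b_smul_left, A.b_smul_right]
      have k1 : A.b (A.mul (A.mul u y) (A.conj x)) v = A.b (A.mul u y) (A.mul v x) :=
        A.hA h1 (A.mul u y) x v
      have k2 : A.b u (A.mul (A.mul v y) (A.conj x)) = A.b (A.mul v y) (A.mul u x) := by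
        rw [A.b_comm]; exact A.hA h1 (A.mul v y) x u
      have k3 := A.B4 u y v x
      linear_combination -k1 - k2 - k3 - (A.b u v) * (A.b_comm y x) + (A.b u v) * hh2
    · intro u v
      rw [A.paraQ h1 x u y, A.paraQ h1 x v y, A.b_sub_left, A.b_sub_right,
        A.b_smul_left, A.b_smul_right]
      have k1 : A.b (A.mul (A.conj x) (A.mul y u)) v = A.b (A.mul y u) (A.mul x v) :=
        A.hB h1 x (A.mul y u) v
      have k2 : A.b u (A.mul (A.conj x) (A.mul y v)) = A.b (A.mul y v) (A.mul x u) := by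
        rw [A.b_comm]; exact A.hB h1 x (A.mul y v) u
      have k3 := A.B4 y u x v
      have cc := A.b_comm (A.mul y v) (A.mul x u)
      linear_combination -k1 - k2 - k3 - cc - (A.b u v) * (A.b_comm y x) + (A.b u v) * hh2
    · intro u v
      have l1 : A.mul x (A.mul (A.conj y) (A.conj u))
          = A.b x y • (A.conj u) - A.mul y (A.mul (A.conj x) (A.conj u)) :=
        eq_sub_of_add_eq (A.linL h1 x y (A.conj u))
      have l2 : A.mul (A.mul (A.conj v) (A.conj y)) x
          = A.b x y • (A.conj v) - A.mul (A.mul (A.conj v) (A.conj x)) y :=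
        eq_sub_of_add_eq (A.linR h1 x y (A.conj v))
      have hm := A.mainE h1 x y (A.conj u) (A.conj v)
      have hm2 : A.mul (A.conj u) (A.mul (A.mul (A.conj v) (A.conj x)) y)
          = (A.b x y • A.mul (A.conj u) (A.conj v)
              + A.b x (A.mul (A.conj u) (A.conj v)) • y
              - A.b y (A.mul (A.conj u) (A.conj v)) • x)
            - A.mul (A.mul y (A.mul (A.conj x) (A.conj u))) (A.conj v) :=
        eq_sub_of_add_eq' hm
      simp only [CompositionAlgebra.paraMul]
      simp only [A.conj_sub, A.conj_smul, A.conj_mul h1, A.conj_conj h1]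
      simp only [map_sub, map_smul, LinearMap.sub_apply, LinearMap.smul_apply]
      rw [l1, l2]
      simp only [map_sub, map_smul, LinearMap.sub_apply, LinearMap.smul_apply]
      rw [hm2]
      match_scalars
      · ring
      · ring
      · linear_combination -hh2
      · ring
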